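/- The Tribonacci word t is 2-balanced: for all factors U and V of t with |U| = |V|, and every letter a ∈ {0,1,2}, one has | |U|ₐ - |V|ₐ | ≤ 2. -/

import Mathlib

/-- The Tribonacci morphism τ: 0↦01, 1↦02, 2↦0, extended to words. -/
def tau : List (Fin 3) → List (Fin 3) :=
  fun w => w.flatMap (fun a => if a = 0 then [0, 1] else if a = 1 then [0, 2] else [0])

/-- The Tribonacci word, the fixed point of τ starting with 0.
Since τⁿ(0) is a prefix of τⁿ⁺¹(0) and |τ^(n+1)(0)| > n, this is well defined. -/
def trib : ℕ → Fin 3 := fun n => (tau^[n + 1] [0]).getD n 0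

/-- `u` is a (finite, contiguous) factor of the Tribonacci word. -/
def IsFactor (u : List (Fin 3)) : Prop :=
  ∃ i : ℕ, u = (List.range u.length).map (fun j => trib (i + j))

/-!
Let `β` be the Tribonacci constant and `θ` the frequency `β^-(a+1)` of the letter `a`. Every prefix
of `t` is a concatenation of distinct words `τᵏ(0)`, so its discrepancy `|w|ₐ - θ |w|` is a partial
sum of the sequence `dₖ = |τᵏ(0)|ₐ - θ |τᵏ(0)|`. This sequence satisfies the Tribonacci recurrence
and lies in its contracting plane, `d (k+2) + (β - 1) d (k+1) + β⁻¹ d k = 0`, whose characteristic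
roots have modulus `β^(-1/2)`. The invariant quadratic form of this recurrence gives
`|dₖ| ≤ 0.7 · 0.75ᵏ`; with the first fourteen terms computed exactly, `∑ |dₖ| < 3/2`. So the
discrepancies of two prefixes differ by less than `3/2`, and for factors `U`, `V` of equal length
`|U|ₐ - |V|ₐ` is the difference of two such differences: an integer of absolute value less than `3`.
-/

lemma List.IsPrefix.take_eq_take {α : Type*} {l₁ l₂ : List α} (h : l₁ <+: l₂) {n : ℕ}
    (hn : n ≤ l₁.length) : l₁.take n = l₂.take n := by
  obtain ⟨s, rfl⟩ := h
  exact (List.take_append_of_le_length hn).symm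

lemma abs_sum_sub_sum_le_tsum {ι : Type*} [DecidableEq ι] {f : ι → ℝ}
    (hf : Summable fun i => |f i|) (s t : Finset ι) :
    |∑ i ∈ s, f i - ∑ i ∈ t, f i| ≤ ∑' i, |f i| := by
  rw [← Finset.sum_sdiff_sub_sum_sdiff]
  calc |∑ i ∈ s \ t, f i - ∑ i ∈ t \ s, f i|
      ≤ ∑ i ∈ s \ t, |f i| + ∑ i ∈ t \ s, |f i| :=
        (abs_sub _ _).trans (add_le_add (Finset.abs_sum_le_sum_abs _ _)
          (Finset.abs_sum_le_sum_abs _ _))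
    _ = ∑ i ∈ s \ t ∪ t \ s, |f i| := (Finset.sum_union disjoint_sdiff_sdiff).symm
    _ ≤ ∑' i, |f i| := hf.sum_le_tsum _ fun i _ => abs_nonneg (f i)

lemma summable_abs_of_abs_le_geometric {x : ℕ → ℝ} {K r : ℝ} (hr : 0 ≤ r) (hr1 : r < 1)
    (hx : ∀ k, |x k| ≤ K * r ^ k) : Summable fun k => |x k| :=
  .of_nonneg_of_le (fun k => abs_nonneg (x k)) hx ((summable_geometric_of_lt_one hr hr1).mul_left K)

lemma tsum_abs_le_of_abs_le_geometric {x : ℕ → ℝ} {K r : ℝ} (hr : 0 ≤ r) (hr1 : r < 1)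
    (hx : ∀ k, |x k| ≤ K * r ^ k) (N : ℕ) :
    ∑' k, |x k| ≤ ∑ k ∈ Finset.range N, |x k| + K * r ^ N / (1 - r) := by
  rw [← (summable_abs_of_abs_le_geometric hr hr1 hx).sum_add_tsum_nat_add N]
  gcongr
  calc ∑' k, |x (k + N)| ≤ ∑' k, K * r ^ N * r ^ k :=
        (summable_abs_of_abs_le_geometric hr hr1 hx).comp_injective (add_left_injective N)
          |>.tsum_le_tsum (fun k => (hx (k + N)).trans_eq (by ring))
          ((summable_geometric_of_lt_one hr hr1).mul_left _)
    _ = K * r ^ N / (1 - r) := by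
        rw [tsum_mul_left, tsum_geometric_of_lt_one hr hr1, div_eq_mul_inv]

lemma abs_le_of_quadratic_recurrence {p q r K : ℝ} {x : ℕ → ℝ}
    (hx : ∀ k, x (k + 2) + p * x (k + 1) + q * x k = 0) (hpq : 0 < 4 * q - p ^ 2)
    (hqr : q ≤ r ^ 2) (hr : 0 ≤ r) (hK : 0 ≤ K)
    (h01 : 4 * (x 1 ^ 2 + p * x 1 * x 0 + q * x 0 ^ 2) ≤ K ^ 2 * (4 * q - p ^ 2)) (k : ℕ) :
    |x k| ≤ K * r ^ k := by
  set Q : ℕ → ℝ := fun k => x (k + 1) ^ 2 + p * x (k + 1) * x k + q * x k ^ 2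
  have hq : 0 ≤ q := by nlinarith
  have hQ : ∀ k, Q k = q ^ k * Q 0 := by
    intro k
    induction k with
    | zero => ring
    | succ k ih =>
      have : Q (k + 1) = q * Q k := by
        simp only [Q]
        linear_combination (x (k + 2) - q * x k) * hx k
      rw [this, ih, pow_succ]
      ring
  have hsq : ∀ k, (4 * q - p ^ 2) * x k ^ 2 ≤ 4 * Q k := fun k => by
    nlinarith [sq_nonneg (2 * x (k + 1) + p * x k)]
  have hQ0 : 0 ≤ 4 * Q 0 / (4 * q - p ^ 2) :=
    div_nonneg (by nlinarith [hsq 0, sq_nonneg (x 0)]) hpq.le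
  refine abs_le_of_sq_le_sq ?_ (by positivity)
  calc x k ^ 2 ≤ 4 * Q k / (4 * q - p ^ 2) := by rw [le_div_iff₀ hpq]; linarith [hsq k]
    _ = q ^ k * (4 * Q 0 / (4 * q - p ^ 2)) := by rw [hQ]; ring
    _ ≤ (r ^ 2) ^ k * K ^ 2 := by
        gcongr
        rwa [div_le_iff₀ hpq]
    _ = (K * r ^ k) ^ 2 := by ring

lemma quadratic_recurrence_of_tribonacci_recurrence {β : ℝ} (hβ : β ^ 3 = β ^ 2 + β + 1)
    {x : ℕ → ℝ} (hx : ∀ k, x (k + 3) = x (k + 2) + x (k + 1) + x k)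
    (h0 : x 2 + (β - 1) * x 1 + (β ^ 2 - β - 1) * x 0 = 0) (k : ℕ) :
    x (k + 2) + (β - 1) * x (k + 1) + (β ^ 2 - β - 1) * x k = 0 := by
  induction k with
  | zero => exact h0
  | succ k ih => linear_combination hx k + β * ih - x k * hβ

lemma abs_sub_mul_le_max {θ l u c L : ℝ} (hθ : θ ∈ Set.uIcc l u) (hL : 0 ≤ L) :
    |c - θ * L| ≤ max |c - l * L| |c - u * L| := by
  rcases Set.mem_uIcc.mp hθ with ⟨hl, hu⟩ | ⟨hu, hl⟩
  · exact (abs_le_max_abs_abs (by nlinarith) (by nlinarith)).trans_eq (max_comm _ _)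
  · exact abs_le_max_abs_abs (by nlinarith) (by nlinarith)

def tribonacci : ℕ → ℕ
  | 0 => 0
  | 1 => 0
  | 2 => 1
  | n + 3 => tribonacci n + tribonacci (n + 1) + tribonacci (n + 2)

lemma eq_tribonacci_add {f : ℕ → ℕ} {s : ℕ} (hf : ∀ k, f (k + 3) = f k + f (k + 1) + f (k + 2))
    (h0 : f 0 = tribonacci s) (h1 : f 1 = tribonacci (s + 1)) (h2 : f 2 = tribonacci (s + 2)) :
    ∀ k, f k = tribonacci (k + s)
  | 0 => by rw [h0, zero_add]
  | 1 => by rw [h1, add_comm]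
  | 2 => by rw [h2, add_comm]
  | k + 3 => by
    rw [hf, eq_tribonacci_add hf h0 h1 h2 k, eq_tribonacci_add hf h0 h1 h2 (k + 1),
      eq_tribonacci_add hf h0 h1 h2 (k + 2), show k + 3 + s = k + s + 3 by omega, tribonacci]
    ring_nf

lemma tau_append (u v : List (Fin 3)) : tau (u ++ v) = tau u ++ tau v :=
  List.flatMap_append

lemma tau_iterate_append (k : ℕ) (u v : List (Fin 3)) :
    tau^[k] (u ++ v) = tau^[k] u ++ tau^[k] v := by
  induction k generalizing u v with
  | zero => rfl
  | succ k ih => rw [Function.iterate_succ_apply, tau_append, ih, ← Function.iterate_succ_apply,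
      ← Function.iterate_succ_apply]

def tribWord (k : ℕ) : List (Fin 3) := tau^[k] [0]

lemma tribWord_succ (k : ℕ) : tribWord (k + 1) = tribWord k ++ tau^[k] [1] :=
  tau_iterate_append k [0] [1]

lemma tau_iterate_one_succ (k : ℕ) : tau^[k + 1] [1] = tribWord k ++ tau^[k] [2] :=
  tau_iterate_append k [0] [2]

lemma tau_iterate_two_succ (k : ℕ) : tau^[k + 1] [2] = tribWord k := rfl

lemma tribWord_add_three (k : ℕ) :
    tribWord (k + 3) = tribWord (k + 2) ++ tribWord (k + 1) ++ tribWord k := by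
  rw [tribWord_succ (k + 2), tau_iterate_one_succ, tau_iterate_two_succ, List.append_assoc]

lemma tribWord_prefix_of_le {k m : ℕ} (h : k ≤ m) : tribWord k <+: tribWord m := by
  induction m, h using Nat.le_induction with
  | base => exact List.prefix_refl _
  | succ m _ ih => exact ih.trans ⟨_, (tribWord_succ m).symm⟩

lemma tribWord_ne_nil (k : ℕ) : tribWord k ≠ [] := by
  induction k with
  | zero => decide
  | succ k ih => simp [tribWord_succ, ih]

lemma tau_iterate_one_ne_nil : ∀ k : ℕ, tau^[k] [1] ≠ []
  | 0 => by decide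
  | k + 1 => by simp [tau_iterate_one_succ, tribWord_ne_nil]

lemma lt_length_tribWord (k : ℕ) : k < (tribWord k).length := by
  induction k with
  | zero => decide
  | succ k ih =>
    have := List.length_pos_iff.mpr (tau_iterate_one_ne_nil k)
    rw [tribWord_succ, List.length_append]
    omega

lemma count_tribWord (a : Fin 3) (k : ℕ) : (tribWord k).count a = tribonacci (k + (2 - a)) := by
  refine eq_tribonacci_add (f := fun k => (tribWord k).count a) (fun k => ?_) ?_ ?_ ?_ k
  · rw [tribWord_add_three, List.count_append, List.count_append]
    ring
  all_goals fin_cases a <;> decide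

lemma length_tribWord (k : ℕ) : (tribWord k).length = tribonacci (k + 3) := by
  refine eq_tribonacci_add (f := fun k => (tribWord k).length) (s := 3) (fun k => ?_)
    (by decide) (by decide) (by decide) k
  rw [tribWord_add_three, List.length_append, List.length_append]
  ring

lemma getD_tribWord {k n : ℕ} (hn : n < (tribWord k).length) : (tribWord k).getD n 0 = trib n := by
  have hk := tribWord_prefix_of_le (le_max_left k (n + 1))
  have hn' := tribWord_prefix_of_le (le_max_right k (n + 1))
  have hlt : n < (tribWord (n + 1)).length := (lt_length_tribWord (n + 1)).trans' n.lt_succ_self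
  change _ = (tribWord (n + 1)).getD n 0
  rw [List.getD_eq_getElem _ _ hn, List.getD_eq_getElem _ _ hlt, hk.getElem, hn'.getElem]

def tribPrefix (n : ℕ) : List (Fin 3) := (List.range n).map trib

lemma tribPrefix_eq_take {k n : ℕ} (hn : n ≤ (tribWord k).length) :
    tribPrefix n = (tribWord k).take n := by
  refine List.ext_getElem (by simp [tribPrefix, hn]) fun m hm _ => ?_
  have hm : m < n := by simpa [tribPrefix] using hm
  rw [List.getElem_take, ← List.getD_eq_getElem (tribWord k) 0, getD_tribWord (hm.trans_le hn)]
  simp [tribPrefix]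

lemma IsFactor.exists_tribPrefix_eq_append {u : List (Fin 3)} (hu : IsFactor u) :
    ∃ i, tribPrefix (i + u.length) = tribPrefix i ++ u := by
  obtain ⟨i, hi⟩ := hu
  refine ⟨i, ?_⟩
  conv_rhs => rw [hi]
  simp [tribPrefix, List.range_add, Function.comp_def]

lemma tau_iterate_one_prefix (k : ℕ) : tau^[k + 2] [1] <+: tribWord (k + 2) := by
  rw [tau_iterate_one_succ, tau_iterate_two_succ, tribWord_succ (k + 1), tau_iterate_one_succ,
    ← List.append_assoc]
  exact List.prefix_append _ _

lemma length_tau_iterate_one_le : ∀ k : ℕ, (tau^[k] [1]).length ≤ (tribWord k).length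
  | 0 | 1 => by decide
  | k + 2 => (tau_iterate_one_prefix k).length_le

lemma take_tau_iterate_one : ∀ (k : ℕ) {m : ℕ}, m < (tau^[k] [1]).length →
    (tau^[k] [1]).take m = (tribWord k).take m
  | 0, 0, _ | 1, 0, _ | 1, 1, _ => by decide
  | k + 2, _, hm => (tau_iterate_one_prefix k).take_eq_take hm.le

lemma exists_take_tribWord_eq_flatten (k : ℕ) {n : ℕ} (hn : n < (tribWord k).length) :
    ∃ L : List ℕ, (∀ j ∈ L, j < k) ∧ L.Nodup ∧ (tribWord k).take n = (L.map tribWord).flatten := by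
  induction k generalizing n with
  | zero => exact ⟨[], by simp, List.nodup_nil, by simp_all [tribWord]⟩
  | succ k ih =>
    rw [tribWord_succ, List.length_append] at hn
    rw [tribWord_succ]
    by_cases h : n < (tribWord k).length
    · obtain ⟨L, hlt, hnd, hL⟩ := ih h
      exact ⟨L, fun j hj => (hlt j hj).trans k.lt_succ_self, hnd,
        by rw [List.take_append_of_le_length h.le, hL]⟩
    · have hm : n - (tribWord k).length < (tau^[k] [1]).length := by omega
      obtain ⟨L, hlt, hnd, hL⟩ := ih (hm.trans_le (length_tau_iterate_one_le k))
      refine ⟨k :: L, List.forall_mem_cons.mpr ⟨k.lt_succ_self,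
        fun j hj => (hlt j hj).trans k.lt_succ_self⟩,
        List.nodup_cons.mpr ⟨fun hk => (hlt k hk).false, hnd⟩, ?_⟩
      rw [List.take_append, List.take_of_length_le (not_lt.mp h), take_tau_iterate_one k hm, hL]
      rfl

lemma exists_tribPrefix_eq_flatten (n : ℕ) :
    ∃ L : List ℕ, L.Nodup ∧ tribPrefix n = (L.map tribWord).flatten := by
  obtain ⟨L, -, hnd, hL⟩ := exists_take_tribWord_eq_flatten n (lt_length_tribWord n)
  exact ⟨L, hnd, (tribPrefix_eq_take (lt_length_tribWord n).le).trans hL⟩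

def discrepancy (θ : ℝ) (a : Fin 3) (w : List (Fin 3)) : ℝ := w.count a - θ * w.length

section Discrepancy

variable (θ : ℝ) (a : Fin 3)

lemma discrepancy_append (u v : List (Fin 3)) :
    discrepancy θ a (u ++ v) = discrepancy θ a u + discrepancy θ a v := by
  simp only [discrepancy, List.count_append, List.length_append]
  push_cast
  ring

lemma discrepancy_flatten (L : List (List (Fin 3))) :
    discrepancy θ a L.flatten = (L.map (discrepancy θ a)).sum := by
  induction L with
  | nil => simp [discrepancy]
  | cons u L ih => rw [List.flatten_cons, discrepancy_append, ih, List.map_cons, List.sum_cons]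

lemma count_sub_count_eq_discrepancy_sub {u v : List (Fin 3)} (h : u.length = v.length) :
    (u.count a : ℝ) - v.count a = discrepancy θ a u - discrepancy θ a v := by
  rw [discrepancy, discrepancy, h]
  ring

lemma discrepancy_tribWord (k : ℕ) :
    discrepancy θ a (tribWord k) = tribonacci (k + (2 - a)) - θ * tribonacci (k + 3) := by
  rw [discrepancy, count_tribWord, length_tribWord]

lemma discrepancy_tribWord_add_three (k : ℕ) :
    discrepancy θ a (tribWord (k + 3)) = discrepancy θ a (tribWord (k + 2)) +
      discrepancy θ a (tribWord (k + 1)) + discrepancy θ a (tribWord k) := by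
  rw [tribWord_add_three, discrepancy_append, discrepancy_append]

lemma discrepancy_tribPrefix_eq_sum (n : ℕ) :
    ∃ s : Finset ℕ, discrepancy θ a (tribPrefix n) = ∑ j ∈ s, discrepancy θ a (tribWord j) := by
  obtain ⟨L, hnd, hL⟩ := exists_tribPrefix_eq_flatten n
  refine ⟨L.toFinset, ?_⟩
  rw [hL, discrepancy_flatten, List.sum_toFinset _ hnd, List.map_map]
  rfl

lemma abs_discrepancy_tribPrefix_sub_le
    (h : Summable fun j => |discrepancy θ a (tribWord j)|) (m n : ℕ) :
    |discrepancy θ a (tribPrefix m) - discrepancy θ a (tribPrefix n)| ≤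
      ∑' j, |discrepancy θ a (tribWord j)| := by
  obtain ⟨s, hs⟩ := discrepancy_tribPrefix_eq_sum θ a m
  obtain ⟨t, ht⟩ := discrepancy_tribPrefix_eq_sum θ a n
  rw [hs, ht]
  exact abs_sum_sub_sum_le_tsum h s t

end Discrepancy

lemma exists_tribonacci_constant :
    ∃ β : ℝ, β ^ 3 = β ^ 2 + β + 1 ∧ 1.8392867 ≤ β ∧ β ≤ 1.8392868 := by
  obtain ⟨β, ⟨hlo, hhi⟩, hβ⟩ := intermediate_value_Icc (show (1.8392867 : ℝ) ≤ 1.8392868 by norm_num)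
    (f := fun x : ℝ => x ^ 3 - x ^ 2 - x - 1) (by fun_prop) (show (0 : ℝ) ∈ Set.Icc _ _ by norm_num)
  exact ⟨β, by linarith [show β ^ 3 - β ^ 2 - β - 1 = 0 from hβ], hlo, hhi⟩

/-- `β⁻¹, β⁻², β⁻³`, written as polynomials in the Tribonacci constant `β`: the frequencies of the
letters `0, 1, 2` in `t`. -/
def tribFreq (β : ℝ) : Fin 3 → ℝ := ![β ^ 2 - β - 1, 2 * β - β ^ 2, 2 - β]

lemma tribFreq_mem_uIcc {β : ℝ} (hlo : 1.8392867 ≤ β) (hhi : β ≤ 1.8392868) (a : Fin 3) :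
    tribFreq β a ∈ Set.uIcc (tribFreq 1.8392867 a) (tribFreq 1.8392868 a) := by
  rw [Set.mem_uIcc]
  fin_cases a
  · left; constructor <;> norm_num [tribFreq] <;> nlinarith
  · right; constructor <;> norm_num [tribFreq] <;> nlinarith
  · right; constructor <;> norm_num [tribFreq] <;> linarith

lemma sum_range_abs_discrepancy_tribWord_le {β : ℝ} (hlo : 1.8392867 ≤ β) (hhi : β ≤ 1.8392868)
    (a : Fin 3) : ∑ j ∈ Finset.range 14, |discrepancy (tribFreq β a) a (tribWord j)| ≤ 1.42 := by
  simp only [discrepancy_tribWord]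
  refine (Finset.sum_le_sum fun j _ =>
    abs_sub_mul_le_max (tribFreq_mem_uIcc hlo hhi a) (Nat.cast_nonneg _)).trans ?_
  fin_cases a <;> simp only [Finset.sum_range_succ, Finset.sum_range_zero] <;>
    norm_num [tribFreq, tribonacci]

lemma discrepancy_tribWord_quadratic_recurrence {β : ℝ} (hβ : β ^ 3 = β ^ 2 + β + 1) (a : Fin 3)
    (k : ℕ) :
    discrepancy (tribFreq β a) a (tribWord (k + 2)) +
      (β - 1) * discrepancy (tribFreq β a) a (tribWord (k + 1)) +
      (β ^ 2 - β - 1) * discrepancy (tribFreq β a) a (tribWord k) = 0 := by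
  refine quadratic_recurrence_of_tribonacci_recurrence
    (x := fun j => discrepancy (tribFreq β a) a (tribWord j)) hβ
    (discrepancy_tribWord_add_three _ a) ?_ k
  simp only [discrepancy_tribWord]
  fin_cases a <;> norm_num [tribFreq, tribonacci]
  · linear_combination (-β - 1) * hβ
  · linear_combination β * hβ
  · linear_combination hβ

lemma abs_discrepancy_tribWord_le {β : ℝ} (hβ : β ^ 3 = β ^ 2 + β + 1) (hlo : 1.8392867 ≤ β)
    (hhi : β ≤ 1.8392868) (a : Fin 3) (k : ℕ) :
    |discrepancy (tribFreq β a) a (tribWord k)| ≤ 0.7 * 0.75 ^ k := by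
  refine abs_le_of_quadratic_recurrence (x := fun j => discrepancy (tribFreq β a) a (tribWord j))
    (discrepancy_tribWord_quadratic_recurrence hβ a)
    (by nlinarith) (by nlinarith) (by norm_num) (by norm_num) ?_ k
  simp only [discrepancy_tribWord]
  fin_cases a <;> norm_num [tribFreq, tribonacci] <;> nlinarith

lemma abs_discrepancy_tribPrefix_sub_lt {β : ℝ} (hβ : β ^ 3 = β ^ 2 + β + 1)
    (hlo : 1.8392867 ≤ β) (hhi : β ≤ 1.8392868) (a : Fin 3) (m n : ℕ) :
    |discrepancy (tribFreq β a) a (tribPrefix m) - discrepancy (tribFreq β a) a (tribPrefix n)| <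
      3 / 2 := by
  have hgeom := abs_discrepancy_tribWord_le hβ hlo hhi a
  refine (abs_discrepancy_tribPrefix_sub_le _ a
    (summable_abs_of_abs_le_geometric (by norm_num) (by norm_num) hgeom) m n).trans_lt ?_
  calc _ ≤ ∑ j ∈ Finset.range 14, |discrepancy (tribFreq β a) a (tribWord j)| +
        0.7 * 0.75 ^ 14 / (1 - 0.75) :=
        tsum_abs_le_of_abs_le_geometric (by norm_num) (by norm_num) hgeom 14
    _ ≤ 1.42 + 0.05 := by
        gcongr
        · exact sum_range_abs_discrepancy_tribWord_le hlo hhi a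
        · norm_num
    _ < 3 / 2 := by norm_num

theorem tribonacci_two_balanced :
    ∀ U V : List (Fin 3), IsFactor U → IsFactor V → U.length = V.length →
      ∀ a : Fin 3, |(U.count a : ℤ) - (V.count a : ℤ)| ≤ 2 := by
  intro U V hU hV hlen a
  obtain ⟨β, hβ, hlo, hhi⟩ := exists_tribonacci_constant
  obtain ⟨i, hi⟩ := hU.exists_tribPrefix_eq_append
  obtain ⟨j, hj⟩ := hV.exists_tribPrefix_eq_append
  set D := fun n => discrepancy (tribFreq β a) a (tribPrefix n)
  have hD := abs_discrepancy_tribPrefix_sub_lt hβ hlo hhi a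
  have hUV : ((U.count a : ℤ) - V.count a : ℝ) =
      (D (i + U.length) - D (j + V.length)) - (D i - D j) := by
    push_cast
    rw [count_sub_count_eq_discrepancy_sub (tribFreq β a) a hlen]
    simp only [D, hi, hj, discrepancy_append]
    ring
  have hreal : |((U.count a : ℤ) - V.count a : ℝ)| < 3 := by
    rw [hUV]
    linarith [abs_sub (D (i + U.length) - D (j + V.length)) (D i - D j),
      hD (i + U.length) (j + V.length), hD i j]
  exact Int.lt_add_one_iff.mp (by exact_mod_cast hreal)
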